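/- arXiv:2205.03188 — 2 statements merged into one kernel-verified Lean document; each statement's English description precedes it below -/
import Mathlib

section
/- Let [σ] and [π] be disjoint cyclic permutations of lengths m and n respectively, with the overall largest letter lying in [σ], and let σ̂ = σ̂_1⋯σ̂_m be the linear representative of [σ] starting with its largest letter, σ̂' = σ̂_2⋯σ̂_m. Then the map sending a cyclic shuffle [α] of [σ] and [π] to α̂' = α̂_2⋯α̂_{m+n}, where α̂ is the representative of [α] starting with the largest letter, is a bijection from the set of cyclic shuffles of [σ] and [π] onto the union over letters i of [π] of the sets of linear shuffles of σ̂' and S_i([π]). -/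
open Polynomial

/-- The descent set of a list (1-based positions `i` with `l_i > l_{i+1}`). -/
def desSet (l : List ℕ) : Finset ℕ :=
  (Finset.Icc 1 (l.length - 1)).filter (fun i => l.getD i 0 < l.getD (i - 1) 0)

/-- The number of descents of a list. -/
def des (l : List ℕ) : ℕ := (desSet l).card

/-- The major index of a list: sum of descent positions. -/
def maj (l : List ℕ) : ℕ := ∑ i ∈ desSet l, i

/-- The cyclic descent set: 1-based positions `i ∈ {1,…,n}` with `l_i > l_{i+1}`,
where `l_{n+1} = l_1`. -/
def cdesSet (l : List ℕ) : Finset ℕ :=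
  (Finset.Icc 1 l.length).filter (fun i => l.getD (i % l.length) 0 < l.getD (i - 1) 0)

/-- The cyclic descent number. -/
def cdes (l : List ℕ) : ℕ := (cdesSet l).card

/-- The cyclic descent-bottom set: values `l_{i+1}` at cyclic descent positions `i`. -/
def cBd (l : List ℕ) : Finset ℕ := (cdesSet l).image (fun i => l.getD (i % l.length) 0)

/-- `α` is a (linear) shuffle of `σ` and `π`. -/
def IsShuffle (σ π α : List ℕ) : Prop :=
  α.Nodup ∧ σ.Sublist α ∧ π.Sublist α ∧ α.length = σ.length + π.length

/-- `σ` is a circular subsequence of `α`: some rotation of `σ` is a subsequence of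
some rotation of `α`. -/
def IsCyclicSubseq (σ α : List ℕ) : Prop := ∃ i j, (σ.rotate i).Sublist (α.rotate j)

/-- `α` is a cyclic shuffle of `σ` and `π` (as cyclic permutations). -/
def IsCyclicShuffle (σ π α : List ℕ) : Prop :=
  α.Nodup ∧ α.length = σ.length + π.length ∧ IsCyclicSubseq σ α ∧ IsCyclicSubseq π α

/-- `l` is the canonical representative of its cyclic class: it starts with its
largest letter. -/
def IsRep (l : List ℕ) : Prop := l ≠ [] ∧ ∀ x ∈ l, x ≤ l.headI

/-- The rotation of `l` starting with the letter `i` (the map `S_i`). -/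
def startAt (l : List ℕ) (i : ℕ) : List ℕ := l.rotate (l.idxOf i)

/-- The Gaussian binomial coefficient as a polynomial in `q = X`. -/
noncomputable def qbinom : ℕ → ℕ → Polynomial ℤ
  | _, 0 => 1
  | 0, _ + 1 => 0
  | n + 1, k + 1 => qbinom n k + X ^ (k + 1) * qbinom n (k + 1)
termination_by n k => n

/-- The Gaussian binomial with integer lower index, `0` for negative lower index. -/
noncomputable def qbinomZ (a : ℕ) (b : ℤ) : Polynomial ℤ := if 0 ≤ b then qbinom a b.toNat else 0

/-- The binomial coefficient with integer lower index, `0` for negative lower index. -/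
def chooseZ (a : ℕ) (b : ℤ) : ℕ := if 0 ≤ b then a.choose b.toNat else 0

/-!
Every letter of `[π]` is smaller than `M = σ̂_1`, so a cyclic shuffle `[α]` has representative
`α̂ = M :: α̂'`, and `β ↦ M :: β` inverts `α̂ ↦ α̂'`. Reading the circular subsequences inside
`α̂`, the unique occurrence of `M` cuts the one of `[σ]` into the linear subsequence `σ̂'` of `α̂'`,
while `[π]`, which avoids `M`, sits in `α̂'` as some rotation `S_i([π])`.
-/

namespace List

variable {α : Type*}

theorem exists_rotate_sublist_of_sublist_rotate {l L : List α} {j : ℕ}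
    (h : l <+ L.rotate j) : ∃ k, l.rotate k <+ L := by
  rw [rotate_eq_drop_append_take_mod] at h
  obtain ⟨l₁, l₂, rfl, h₁, h₂⟩ := sublist_append_iff.mp h
  refine ⟨l₁.length, ?_⟩
  rw [rotate_append_length_eq, ← take_append_drop (j % L.length) L]
  exact h₂.append h₁

theorem exists_rotate_cons_eq_append_cons (x : α) (s : List α) (k : ℕ) :
    ∃ d t, (x :: s).rotate k = d ++ x :: t ∧ t ++ d = s := by
  rw [rotate_eq_drop_append_take_mod]
  rcases k % (x :: s).length with _ | m
  · exact ⟨[], s, by simp, by simp⟩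
  · exact ⟨s.drop m, s.take m, by simp, take_append_drop m s⟩

theorem sublist_of_rotate_cons_sublist_cons {x : α} {s a : List α} {k : ℕ}
    (h : (x :: s).rotate k <+ x :: a) (hx : x ∉ a) : s <+ a := by
  obtain ⟨d, t, hrot, rfl⟩ := exists_rotate_cons_eq_append_cons x s k
  rw [hrot] at h
  rcases sublist_cons_iff.mp h with h | ⟨r, hr, hra⟩
  · exact absurd (h.subset (by simp)) hx
  · cases d with
    | nil => simp_all
    | cons y d =>
      obtain ⟨rfl, rfl⟩ := cons_eq_cons.mp hr
      exact absurd (hra.subset (by simp)) hx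

theorem perm_append_of_subset {l s t : List α} (hst : (s ++ t).Nodup) (hs : s ⊆ l) (ht : t ⊆ l)
    (hlen : l.length ≤ s.length + t.length) : l ~ s ++ t :=
  ((hst.subperm (append_subset.mpr ⟨hs, ht⟩)).perm_of_length_le (by simpa using hlen)).symm

end List

open List

theorem startAt_getElem {π : List ℕ} (hπ : π.Nodup) {k : ℕ} (hk : k < π.length) :
    startAt π π[k] = π.rotate k := by
  rw [startAt, hπ.idxOf_getElem k hk]

theorem exists_startAt_eq_rotate {π : List ℕ} (hπ : π.Nodup) (hπ0 : π ≠ []) (k : ℕ) :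
    ∃ i ∈ π, startAt π i = π.rotate k := by
  have hk : k % π.length < π.length := Nat.mod_lt _ (length_pos_iff.mpr hπ0)
  exact ⟨π[k % π.length], getElem_mem hk, by rw [startAt_getElem hπ hk, rotate_mod]⟩

theorem isCyclicSubseq_iff {s l : List ℕ} : IsCyclicSubseq s l ↔ ∃ k, s.rotate k <+ l := by
  constructor
  · rintro ⟨i, j, h⟩
    obtain ⟨k, hk⟩ := exists_rotate_sublist_of_sublist_rotate h
    exact ⟨i + k, by rwa [← rotate_rotate]⟩
  · rintro ⟨k, h⟩
    exact ⟨k, 0, by rwa [rotate_zero]⟩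

theorem IsCyclicSubseq.subset {s l : List ℕ} (h : IsCyclicSubseq s l) : s ⊆ l := by
  obtain ⟨k, hk⟩ := isCyclicSubseq_iff.mp h
  exact fun x hx => hk.subset (mem_rotate.mpr hx)

theorem IsCyclicShuffle.perm {σ π α : List ℕ} (hσπ : (σ ++ π).Nodup)
    (h : IsCyclicShuffle σ π α) : α ~ σ ++ π :=
  perm_append_of_subset hσπ h.2.2.1.subset h.2.2.2.subset h.2.1.le

theorem IsShuffle.perm {σ π β : List ℕ} (hσπ : (σ ++ π).Nodup) (h : IsShuffle σ π β) :
    β ~ σ ++ π :=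
  perm_append_of_subset hσπ h.2.1.subset h.2.2.1.subset h.2.2.2.le

theorem IsRep.eq_cons_of_forall_le {l : List ℕ} {M : ℕ} (hl : IsRep l) (hM : M ∈ l)
    (hle : ∀ x ∈ l, x ≤ M) : l = M :: l.tail := by
  obtain ⟨⟨a, t, rfl⟩, hhead⟩ := And.imp_left exists_cons_of_ne_nil hl
  rw [le_antisymm (hle a mem_cons_self) (hhead M hM)]
  rfl

theorem IsCyclicShuffle.exists_isShuffle_of_cons {M : ℕ} {s π a : List ℕ}
    (h : IsCyclicShuffle (M :: s) π (M :: a)) (hπ : π.Nodup) (hπ0 : π ≠ []) (hMπ : M ∉ π) :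
    ∃ i ∈ π, IsShuffle s (startAt π i) a := by
  obtain ⟨hnd, hlen, hσ, hπa⟩ := h
  have hMa : M ∉ a := (nodup_cons.mp hnd).1
  obtain ⟨k, hk⟩ := isCyclicSubseq_iff.mp hσ
  obtain ⟨k', hk'⟩ := isCyclicSubseq_iff.mp hπa
  obtain ⟨i, hi, hrot⟩ := exists_startAt_eq_rotate hπ hπ0 k'
  refine ⟨i, hi, hnd.of_cons, sublist_of_rotate_cons_sublist_cons hk hMa, ?_, ?_⟩
  · rw [hrot]
    exact (sublist_cons_iff.mp hk').resolve_right
      fun ⟨_, hr, _⟩ => hMπ (mem_rotate.mp (hr ▸ mem_cons_self))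
  · simp only [length_cons, startAt, length_rotate] at hlen ⊢
    omega

theorem IsShuffle.isCyclicShuffle_cons {M i : ℕ} {s π b : List ℕ}
    (h : IsShuffle s (startAt π i) b) (hMb : M ∉ b) : IsCyclicShuffle (M :: s) π (M :: b) := by
  obtain ⟨hnd, hs, hπb, hlen⟩ := h
  refine ⟨nodup_cons.mpr ⟨hMb, hnd⟩, ?_, isCyclicSubseq_iff.mpr ⟨0, ?_⟩,
    isCyclicSubseq_iff.mpr ⟨π.idxOf i, hπb.trans (sublist_cons_self M b)⟩⟩
  · simp only [length_cons, startAt, length_rotate] at hlen ⊢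
    omega
  · simpa using hs

/-- The bijection between cyclic shuffles of `[σ]` and `[π]` and the union over
letters `i` of `[π]` of the linear shuffles of `σ̂'` and `S_i([π])`. -/
theorem cyclic_shuffle_bijection (σ π : List ℕ) (hσ : σ.Nodup) (hπ : π.Nodup)
    (hσ0 : σ ≠ []) (hπ0 : π ≠ []) (hdisj : σ.Disjoint π) (hrep : IsRep σ)
    (hmax : ∀ x ∈ π, x < σ.headI) :
    Set.BijOn (fun α => α.tail) {α : List ℕ | IsRep α ∧ IsCyclicShuffle σ π α}
      (⋃ i ∈ {i | i ∈ π}, {β : List ℕ | IsShuffle σ.tail (startAt π i) β}) := by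
  obtain ⟨M, s, rfl⟩ := exists_cons_of_ne_nil hσ0
  have hnd : (M :: s ++ π).Nodup := hσ.append hπ hdisj
  have hMπ : M ∉ π := fun h => (hmax M h).false
  have hlt : ∀ x ∈ s ++ π, x < M := by
    intro x hx
    rcases mem_append.mp hx with hx | hx
    · exact lt_of_le_of_ne (hrep.2 x (mem_cons_of_mem M hx))
        fun h => (nodup_cons.mp hσ).1 (h ▸ hx)
    · exact hmax x hx
  have hhead : ∀ α ∈ {α | IsRep α ∧ IsCyclicShuffle (M :: s) π α}, α = M :: α.tail := by
    rintro α ⟨hα, hshuf⟩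
    have hperm := IsCyclicShuffle.perm hnd hshuf
    refine hα.eq_cons_of_forall_le (hperm.mem_iff.mpr mem_cons_self) fun x hx => ?_
    rcases mem_cons.mp (hperm.subset hx) with rfl | hx
    exacts [le_rfl, (hlt x hx).le]
  refine ⟨fun α hα => ?_, fun α hα β hβ hαβ => ?_, fun b hb => ?_⟩
  · have hshuf := hα.2
    rw [hhead α hα] at hshuf
    simpa using hshuf.exists_isShuffle_of_cons hπ hπ0 hMπ
  · rw [hhead α hα, hhead β hβ]
    exact congrArg _ hαβ
  · simp only [Set.mem_iUnion] at hb
    obtain ⟨i, -, hb⟩ := hb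
    have hrot : s ++ startAt π i ~ s ++ π := (rotate_perm π _).append_left s
    have hperm : b ~ s ++ π := (hb.perm (hrot.nodup_iff.mpr hnd.of_cons)).trans hrot
    have hbM : ∀ x ∈ b, x < M := fun x hx => hlt x (hperm.subset hx)
    refine ⟨M :: b, ⟨⟨cons_ne_nil M b, ?_⟩, hb.isCyclicShuffle_cons (fun h => (hbM M h).false)⟩,
      rfl⟩
    simpa using fun x hx => (hbM x hx).le
end

section
/- Summing the Adin–Gessel–Reiner–Roichman formula over all k recovers the total count: Σ_k (k(m−r)(n−s)+(m+n−k)rs)/((m−r+s)(n−s+r)) · C(m−r+s, k−r) · C(n−s+r, k−s) = (m+n−1)·C(m+n−2, m−1), for integers 0 < r ≤ m and 0 < s ≤ n with m−r+s > 0 and n−s+r > 0. -/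
open Polynomial

/-!
Put `A = m - r + s` and `B = n - s + r`, so that `A + B = m + n`. The weight in front of
`C(A, k - r) C(B, k - s)` is affine in `k`, so only two sums are needed. Since
`C(B, k - s) = C(B, n + r - k)`, Chu–Vandermonde gives `Σ C(A, k - r) C(B, k - s) = C(m + n, n)`;
writing `k = (k - r) + r` and absorbing `(k - r) C(A, k - r) = A C(A - 1, k - r - 1)` gives
`Σ k C(A, k - r) C(B, k - s) = A C(m + n - 1, n - 1) + r C(m + n, n)`. What remains is an identity
of rational functions once everything is expressed through `C(m + n - 1, n - 1)`.
-/

open Function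

namespace Nat

theorem mul_add_choose_right (m : ℕ) {n : ℕ} (hn : 0 < n) :
    n * (m + n).choose n = (m + n) * (m + n - 1).choose (n - 1) := by
  obtain ⟨q, rfl⟩ : ∃ q, n = q + 1 := ⟨n - 1, by omega⟩
  rw [Nat.add_sub_cancel, ← add_assoc, Nat.add_sub_cancel, Nat.add_one_mul_choose_eq, mul_comm]

theorem add_sub_one_mul_choose {m n : ℕ} (hm : 0 < m) (hn : 0 < n) :
    (m + n - 1) * (m + n - 2).choose (m - 1) = m * (m + n - 1).choose (n - 1) := by
  obtain ⟨p, rfl⟩ : ∃ p, m = p + 1 := ⟨m - 1, by omega⟩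
  obtain ⟨q, rfl⟩ : ∃ q, n = q + 1 := ⟨n - 1, by omega⟩
  rw [show p + 1 + (q + 1) - 1 = p + 1 + q by omega, show p + 1 + (q + 1) - 2 = p + q by omega,
    Nat.add_sub_cancel, Nat.add_sub_cancel, ← Nat.choose_symm_add, Nat.add_right_comm,
    Nat.add_one_mul_choose_eq, mul_comm]

end Nat

theorem chooseZ_natCast (a k : ℕ) : chooseZ a k = a.choose k := by
  simp [chooseZ]

theorem chooseZ_of_neg {a : ℕ} {b : ℤ} (h : b < 0) : chooseZ a b = 0 := by
  simp [chooseZ, h.not_ge]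

theorem chooseZ_of_lt {a : ℕ} {b : ℤ} (h : (a : ℤ) < b) : chooseZ a b = 0 := by
  rw [chooseZ, if_pos (by omega)]
  exact Nat.choose_eq_zero_of_lt (by omega)

theorem chooseZ_symm (a : ℕ) (b : ℤ) : chooseZ a (a - b) = chooseZ a b := by
  rcases lt_or_ge b 0 with hb | hb
  · rw [chooseZ_of_neg hb, chooseZ_of_lt (by omega)]
  rcases le_or_gt b a with hba | hab
  · lift b to ℕ using hb
    rw [← Nat.cast_sub (by omega), chooseZ_natCast, chooseZ_natCast, Nat.choose_symm (by omega)]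
  · rw [chooseZ_of_lt hab, chooseZ_of_neg (by omega)]

theorem mul_chooseZ (a : ℕ) (b : ℤ) : b * chooseZ a b = a * chooseZ (a - 1) (b - 1) := by
  rcases lt_or_ge 0 b with hb | hb
  · obtain ⟨t, rfl⟩ : ∃ t : ℕ, b = t + 1 := ⟨(b - 1).toNat, by omega⟩
    rw [add_sub_cancel_right, ← Nat.cast_succ, chooseZ_natCast, chooseZ_natCast]
    rcases a with _ | a
    · simp
    · rw [Nat.add_sub_cancel]
      exact_mod_cast (mul_comm _ _).trans (Nat.add_one_mul_choose_eq a t).symm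
  · rw [chooseZ_of_neg (by omega : b - 1 < 0)]
    rcases hb.lt_or_eq with hb | rfl
    · rw [chooseZ_of_neg hb]; simp
    · simp

section

variable {R : Type*}

@[fun_prop]
theorem hasFiniteSupport_chooseZ_sub [Semiring R] (a : ℕ) (u : ℤ) :
    HasFiniteSupport fun k : ℤ => (chooseZ a (k - u) : R) := by
  refine (Set.finite_Icc u (u + a)).subset fun k hk => ?_
  by_contra h
  rw [Set.mem_Icc, not_and_or, not_le, not_le] at h
  rcases h with h | h
  · exact hk (by simp [chooseZ_of_neg (by omega : k - u < 0)])
  · exact hk (by simp [chooseZ_of_lt (by omega : (a : ℤ) < k - u)])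

theorem finsum_chooseZ_mul_chooseZ_sub [Semiring R] (a b : ℕ) (u v : ℤ) :
    ∑ᶠ k : ℤ, (chooseZ a (k - u) : R) * chooseZ b (v - k) = chooseZ (a + b) (v - u) := by
  rw [← finsum_comp_equiv (Equiv.addRight u)]
  simp only [Equiv.coe_addRight, add_sub_cancel_right, sub_add_eq_sub_sub_swap]
  rcases lt_or_ge (v - u) 0 with hw | hw
  · rw [chooseZ_of_neg hw, Nat.cast_zero]
    refine finsum_eq_zero_of_forall_eq_zero fun i => ?_
    rcases lt_or_ge i 0 with hi | hi
    · simp [chooseZ_of_neg hi]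
    · simp [chooseZ_of_neg (by omega : v - u - i < 0)]
  obtain ⟨w, hw⟩ := Int.eq_ofNat_of_zero_le hw
  rw [hw, chooseZ_natCast, Nat.add_choose_eq, Finset.Nat.sum_antidiagonal_eq_sum_range_succ_mk,
    Nat.cast_sum,
    finsum_eq_sum_of_support_subset (s := (Finset.range (w + 1)).map Nat.castEmbedding),
    Finset.sum_map]
  · refine Finset.sum_congr rfl fun i hi => ?_
    rw [Finset.mem_range] at hi
    simp [chooseZ_natCast, ← Nat.cast_sub (by omega : i ≤ w)]
  · intro i hi
    have hi0 : 0 ≤ i := by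
      by_contra h
      exact hi (by simp [chooseZ_of_neg (not_le.mp h)])
    have hiw : i ≤ w := by
      by_contra h
      exact hi (by simp [chooseZ_of_neg (by omega : (w : ℤ) - i < 0)])
    lift i to ℕ using hi0
    simp only [Finset.coe_map, Set.mem_image, Finset.mem_coe, Finset.mem_range]
    exact ⟨i, by omega, rfl⟩

theorem finsum_chooseZ_mul_chooseZ [Semiring R] (a b : ℕ) (u v : ℤ) :
    ∑ᶠ k : ℤ, (chooseZ a (k - u) : R) * chooseZ b (k - v) = chooseZ (a + b) (b + v - u) := by
  simp_rw [← chooseZ_symm b (_ - v), ← finsum_chooseZ_mul_chooseZ_sub, sub_sub_eq_add_sub]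

theorem finsum_mul_chooseZ_mul_chooseZ [Ring R] (a b : ℕ) (u v : ℤ) :
    ∑ᶠ k : ℤ, (k : R) * chooseZ a (k - u) * chooseZ b (k - v)
      = a * chooseZ (a - 1 + b) (b + v - u - 1) + u * chooseZ (a + b) (b + v - u) := by
  have hk (k : ℤ) : (k : R) * chooseZ a (k - u)
      = a * chooseZ (a - 1) (k - (u + 1)) + u * chooseZ a (k - u) := by
    have h := congrArg (Int.cast : ℤ → R) (mul_chooseZ a (k - u))
    push_cast at h
    rw [← sub_sub, ← h, sub_mul, sub_add_cancel]
  simp_rw [hk, add_mul, mul_assoc]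
  rw [finsum_add_distrib (by fun_prop) (by fun_prop), ← mul_finsum' _ _ (by fun_prop),
    ← mul_finsum' _ _ (by fun_prop), finsum_chooseZ_mul_chooseZ, finsum_chooseZ_mul_chooseZ,
    sub_add_eq_sub_sub]

end

theorem sum_AGRR_general (m n r s : ℕ) (hr : 0 < r) (hrm : r ≤ m) (hs : 0 < s) (hsn : s ≤ n) :
    ∑ᶠ k : ℤ, ((k : ℚ) * ((m : ℚ) - r) * ((n : ℚ) - s) + ((m : ℚ) + n - k) * r * s)
        / ((((m : ℚ) - r) + s) * (((n : ℚ) - s) + r))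
        * chooseZ (m - r + s) (k - r) * chooseZ (n - s + r) (k - s)
      = (((m + n - 1) * (m + n - 2).choose (m - 1) : ℕ) : ℚ) := by
  set A := m - r + s
  set B := n - s + r
  have hA : (A : ℚ) = m - r + s := by push_cast [A, hrm]; ring
  have hB : (B : ℚ) = n - s + r := by push_cast [B, hsn]; ring
  have hsplit (k : ℤ) : ((k : ℚ) * ((m : ℚ) - r) * ((n : ℚ) - s) + ((m : ℚ) + n - k) * r * s)
        / ((((m : ℚ) - r) + s) * (((n : ℚ) - s) + r)) * chooseZ A (k - r) * chooseZ B (k - s)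
      = ((m - r) * (n - s) - r * s) / (A * B) * ((k : ℚ) * chooseZ A (k - r) * chooseZ B (k - s))
        + (m + n) * r * s / (A * B) * ((chooseZ A (k - r) : ℚ) * chooseZ B (k - s)) := by
    rw [hA, hB]; ring
  rw [finsum_congr hsplit, finsum_add_distrib (by fun_prop) (by fun_prop),
    ← mul_finsum' _ _ (by fun_prop), ← mul_finsum' _ _ (by fun_prop),
    finsum_mul_chooseZ_mul_chooseZ, finsum_chooseZ_mul_chooseZ,
    show (B : ℤ) + s - r = n by omega, show A - 1 + B = m + n - 1 by omega,
    show A + B = m + n by omega, show (n : ℤ) - 1 = (n - 1 : ℕ) by omega,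
    chooseZ_natCast, chooseZ_natCast, Nat.add_sub_one_mul_choose (by omega) (by omega)]
  have hn : (n : ℚ) ≠ 0 := Nat.cast_ne_zero.mpr (by omega)
  have hA0 : (m : ℚ) - r + s ≠ 0 := hA ▸ Nat.cast_ne_zero.mpr (by omega)
  have hB0 : (n : ℚ) - s + r ≠ 0 := hB ▸ Nat.cast_ne_zero.mpr (by omega)
  have hC : ((m + n).choose n : ℚ) = (m + n) * (m + n - 1).choose (n - 1) / n := by
    rw [eq_div_iff hn, mul_comm]
    exact_mod_cast Nat.mul_add_choose_right m (by omega)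
  rw [hC, hA, hB]
  push_cast
  field_simp
  ring

/-- Summing the AGRR formula over all integers `k` recovers the total number
of cyclic shuffles. -/
theorem sum_AGRR (m n r s : ℕ) (hr : 0 < r) (hrm : r ≤ m) (hs : 0 < s) (hsn : s ≤ n)
    (h1 : 0 < m - r + s) (h2 : 0 < n - s + r) :
    ∑ᶠ k : ℤ, ((k : ℚ) * ((m : ℚ) - r) * ((n : ℚ) - s) + ((m : ℚ) + n - k) * r * s)
        / ((((m : ℚ) - r) + s) * (((n : ℚ) - s) + r))
        * chooseZ (m - r + s) (k - r) * chooseZ (n - s + r) (k - s)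
      = (((m + n - 1) * (m + n - 2).choose (m - 1) : ℕ) : ℚ) :=
  sum_AGRR_general m n r s hr hrm hs hsn
end
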